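/- Let δ > 0, λ > 0, κ > 0, and K₀ > 0. With the standard detection thresholds ε_s = 0.1·K₀ and ε_t = 0.5·κ/δ, the boundaries d* = (λ/√δ)·ln(K₀/ε_s) and τ* = (1/δ)·ln(κ/(δ·ε_t)) satisfy d*/τ* = λ·√δ·(ln 10 / ln 2), and moreover 3.32 < ln 10 / ln 2 < 3.33. -/

import Mathlib

open Real

/-- No sign condition on `δ`: when `δ ≤ 0` both sides vanish, as `√δ = 0` and `x / 0 = 0`. -/
lemma div_sqrt_mul_div_one_div_mul (x a b δ : ℝ) :
    (x / √δ * a) / (1 / δ * b) = x * √δ * (a / b) := by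
  rcases le_or_gt δ 0 with hδ | hδ
  · simp [sqrt_eq_zero_of_nonpos hδ]
  · have hsqrt : √δ ≠ 0 := (sqrt_pos.mpr hδ).ne'
    calc (x / √δ * a) / (1 / δ * b) = x * (δ / √δ) * (a / b) := by field_simp
      _ = x * √δ * (a / b) := by rw [div_sqrt]

lemma natCast_div_lt_log_div_log {a b : ℝ} {p q : ℕ} (hb : 1 < b) (hq : 0 < q)
    (h : b ^ p < a ^ q) : (p / q : ℝ) < log a / log b := by
  have hlog : p * log b < q * log a := by
    rw [← log_pow, ← log_pow]
    exact log_lt_log (pow_pos (by linarith) p) h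
  rw [div_lt_div_iff₀ (by exact_mod_cast hq) (log_pos hb)]
  linarith

lemma log_div_log_lt_natCast_div {a b : ℝ} {p q : ℕ} (ha : 0 < a) (hb : 1 < b) (hq : 0 < q)
    (h : a ^ q < b ^ p) : log a / log b < (p / q : ℝ) := by
  have hlog : q * log a < p * log b := by
    rw [← log_pow, ← log_pow]
    exact log_lt_log (pow_pos ha q) h
  rw [div_lt_div_iff₀ (log_pos hb) (by exact_mod_cast hq)]
  linarith

theorem stmt_8_general (δ lam κ K₀ : ℝ) (hδ : 0 < δ) (hκ : 0 < κ) (hK₀ : 0 < K₀) :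
    ((lam / Real.sqrt δ) * Real.log (K₀ / (0.1 * K₀))) /
      ((1 / δ) * Real.log (κ / (δ * (0.5 * κ / δ))))
      = lam * Real.sqrt δ * (Real.log 10 / Real.log 2) ∧
    3.32 < Real.log 10 / Real.log 2 ∧ Real.log 10 / Real.log 2 < 3.33 := by
  have hspatial : K₀ / (0.1 * K₀) = 10 := by
    rw [div_mul_cancel_right₀ hK₀.ne']
    norm_num
  have htemporal : κ / (δ * (0.5 * κ / δ)) = 2 := by
    rw [mul_div_cancel₀ _ hδ.ne', div_mul_cancel_right₀ hκ.ne']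
    norm_num
  refine ⟨?_, ?_, ?_⟩
  · rw [hspatial, htemporal, div_sqrt_mul_div_one_div_mul]
  · have h := natCast_div_lt_log_div_log (a := 10) (p := 83) (q := 25) one_lt_two (by norm_num)
      (by norm_num)
    norm_num at h ⊢
    exact h
  · -- `log₂ 10 < 103/31 < 3.33`, since `10^31 < 2^103`
    have h := log_div_log_lt_natCast_div (a := 10) (p := 103) (q := 31) (by norm_num) one_lt_two
      (by norm_num) (by norm_num)
    norm_num at h ⊢
    linarith

/-- With the standard thresholds ε_s = 0.1·K₀ and ε_t = 0.5·κ/δ, the boundaries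
d* = (λ/√δ)·ln(K₀/ε_s) and τ* = (1/δ)·ln(κ/(δ·ε_t)) satisfy
d*/τ* = λ·√δ·(ln 10 / ln 2), and 3.32 < ln 10 / ln 2 < 3.33. -/
theorem stmt_8 (δ lam κ K₀ : ℝ) (hδ : 0 < δ) (hlam : 0 < lam) (hκ : 0 < κ) (hK₀ : 0 < K₀) :
    ((lam / Real.sqrt δ) * Real.log (K₀ / (0.1 * K₀))) /
      ((1 / δ) * Real.log (κ / (δ * (0.5 * κ / δ))))
      = lam * Real.sqrt δ * (Real.log 10 / Real.log 2) ∧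
    3.32 < Real.log 10 / Real.log 2 ∧ Real.log 10 / Real.log 2 < 3.33 :=
  stmt_8_general δ lam κ K₀ hδ hκ hK₀
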